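/- Let σ > 0, t > 0, and let Y = σW + J where σW is a centered Gaussian of variance σ²t (density p^{σW}_t) and J is an independent random variable, so Y has density p_t = p^{σW}_t * P_J which is C¹. Suppose E[e^{2Y}] < ∞. Then ∫_ℝ |e^x − 1| |p_t'(x)| dx ≤ (1/(σ√t)) · ‖e^Y − 1‖_{L₂(P)}. -/

import Mathlib

/-!
Differentiating under the integral, `p_t'(x) = -∫ (x - y) / (σ²t) · g(x - y) dP_J(y)`, where `g`
is the Gaussian density. So `|e^x - 1| |p_t'(x)|` is at most the `P_J`-integral of the product
of `|e^x - 1| √g(x - y)` and `|x - y| / (σ²t) · √g(x - y)`. Cauchy–Schwarz on `ℝ × ℝ` against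
`dx ⊗ P_J` bounds the left side by the product of the square roots of `E[(e^Y - 1)²]` and of
the Fisher information `∫ (g'/g)² g = 1/(σ²t)` of the Gaussian.
-/

open MeasureTheory

/-- The Gaussian density of variance `σ² t`. -/
noncomputable def gaussDens (σ t x : ℝ) : ℝ :=
  Real.exp (-(x ^ 2) / (2 * σ ^ 2 * t)) / Real.sqrt (2 * Real.pi * σ ^ 2 * t)

/-- The density of `Y = σW_t + J`: convolution of the Gaussian density with the law of `J`. -/
noncomputable def convDens (σ t : ℝ) (νJ : Measure ℝ) (x : ℝ) : ℝ :=
  ∫ y, gaussDens σ t (x - y) ∂νJ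

open ProbabilityTheory Real
open scoped ENNReal NNReal

lemma gaussDens_eq_gaussianPDFReal (σ t : ℝ) :
    gaussDens σ t = gaussianPDFReal 0 (σ ^ 2 * t).toNNReal := by
  ext x
  rcases le_or_gt (σ ^ 2 * t) 0 with hv | hv
  · rw [toNNReal_of_nonpos hv, gaussianPDFReal_zero_var, gaussDens,
      sqrt_eq_zero_of_nonpos (by nlinarith [pi_pos]), div_zero, Pi.zero_apply]
  · rw [gaussianPDFReal, gaussDens, coe_toNNReal _ hv.le, sub_zero, div_eq_inv_mul]
    simp only [mul_assoc]

lemma gaussDens_nonneg (σ t x : ℝ) : 0 ≤ gaussDens σ t x := by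
  rw [gaussDens_eq_gaussianPDFReal]
  exact gaussianPDFReal_nonneg _ _ _

@[fun_prop]
lemma continuous_gaussDens (σ t : ℝ) : Continuous (gaussDens σ t) := by
  unfold gaussDens
  fun_prop

lemma gaussDens_le {t : ℝ} (ht : 0 ≤ t) (σ x : ℝ) :
    gaussDens σ t x ≤ (√(2 * π * σ ^ 2 * t))⁻¹ := by
  rw [gaussDens, div_eq_mul_inv]
  refine mul_le_of_le_one_left (by positivity) (exp_le_one_iff.2 ?_)
  exact div_nonpos_of_nonpos_of_nonneg (neg_nonpos.2 (sq_nonneg x)) (by positivity)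

lemma abs_mul_exp_neg_sq_div_le {v : ℝ} (hv : 0 < v) (x : ℝ) :
    |x| * exp (-(x ^ 2) / (2 * v)) ≤ √v := by
  set u := |x| / √v
  have hsv : 0 < √v := sqrt_pos.2 hv
  have hu : u ^ 2 / 2 = x ^ 2 / (2 * v) := by
    rw [div_pow, sq_abs, sq_sqrt hv.le, div_div, mul_comm]
  have hu_le : u ≤ exp (u ^ 2 / 2) := by
    nlinarith [add_one_le_exp (u ^ 2 / 2), sq_nonneg (u - 1)]
  rw [hu, div_le_iff₀ hsv] at hu_le
  calc |x| * exp (-(x ^ 2) / (2 * v))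
      ≤ exp (x ^ 2 / (2 * v)) * √v * exp (-(x ^ 2) / (2 * v)) := by gcongr
    _ = √v := by rw [mul_right_comm, ← exp_add, neg_div, add_neg_cancel, exp_zero, one_mul]

lemma abs_mul_gaussDens_le {σ t : ℝ} (hσ : σ ≠ 0) (ht : 0 < t) (x : ℝ) :
    |x| * gaussDens σ t x ≤ √(σ ^ 2 * t) * (√(2 * π * σ ^ 2 * t))⁻¹ := by
  rw [gaussDens, div_eq_mul_inv, ← mul_assoc, mul_assoc 2]
  gcongr
  exact abs_mul_exp_neg_sq_div_le (by positivity) x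

lemma hasDerivAt_gaussDens (σ t x : ℝ) :
    HasDerivAt (gaussDens σ t) (-(x / (σ ^ 2 * t)) * gaussDens σ t x) x := by
  have h := (((hasDerivAt_pow 2 x).neg.div_const (2 * σ ^ 2 * t)).exp).div_const
    (√(2 * π * σ ^ 2 * t))
  simp only [Pi.neg_apply] at h
  refine h.congr_deriv ?_
  rw [gaussDens]
  ring

lemma lintegral_gaussDens {σ t : ℝ} (hσ : σ ≠ 0) (ht : 0 < t) :
    ∫⁻ x, ENNReal.ofReal (gaussDens σ t x) = 1 := by
  rw [gaussDens_eq_gaussianPDFReal]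
  exact lintegral_gaussianPDFReal_eq_one 0 (by simp; positivity)

lemma integral_sq_gaussianReal (v : ℝ≥0) : ∫ x, x ^ 2 ∂gaussianReal 0 v = v := by
  simpa [variance_eq_integral measurable_id'.aemeasurable] using
    variance_fun_id_gaussianReal (μ := 0) (v := v)

lemma lintegral_sq_mul_gaussDens {σ t : ℝ} (hσ : σ ≠ 0) (ht : 0 < t) :
    ∫⁻ x, ENNReal.ofReal (x ^ 2) * ENNReal.ofReal (gaussDens σ t x) =
      ENNReal.ofReal (σ ^ 2 * t) := by
  have hv : (σ ^ 2 * t).toNNReal ≠ 0 := by simp; positivity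
  have hsq : Integrable (fun x : ℝ => x ^ 2) (gaussianReal 0 (σ ^ 2 * t).toNNReal) :=
    (memLp_id_gaussianReal 2).integrable_sq
  calc ∫⁻ x, ENNReal.ofReal (x ^ 2) * ENNReal.ofReal (gaussDens σ t x)
      = ∫⁻ x, ENNReal.ofReal (x ^ 2) ∂gaussianReal 0 (σ ^ 2 * t).toNNReal := by
        rw [gaussianReal_of_var_ne_zero _ hv, lintegral_withDensity_eq_lintegral_mul _
          (measurable_gaussianPDF _ _) (by fun_prop), gaussDens_eq_gaussianPDFReal]
        simp [gaussianPDF_def, mul_comm]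
    _ = ENNReal.ofReal (σ ^ 2 * t) := by
        rw [← ofReal_integral_eq_lintegral_ofReal hsq (ae_of_all _ fun x => sq_nonneg x),
          integral_sq_gaussianReal, coe_toNNReal _ (by positivity)]

lemma lintegral_sq_div_mul_gaussDens {σ t : ℝ} (hσ : σ ≠ 0) (ht : 0 < t) :
    ∫⁻ x, ENNReal.ofReal ((x / (σ ^ 2 * t)) ^ 2) * ENNReal.ofReal (gaussDens σ t x) =
      ENNReal.ofReal (σ ^ 2 * t)⁻¹ := by
  have hv : 0 < σ ^ 2 * t := by positivity
  simp_rw [div_pow, div_eq_inv_mul (_ ^ 2), ENNReal.ofReal_mul (inv_nonneg.2 (sq_nonneg _)),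
    mul_assoc]
  rw [lintegral_const_mul' _ _ ENNReal.ofReal_ne_top, lintegral_sq_mul_gaussDens hσ ht,
    ← ENNReal.ofReal_mul (by positivity)]
  congr 1
  field_simp

lemma convDens_nonneg (σ t : ℝ) (ν : Measure ℝ) (x : ℝ) : 0 ≤ convDens σ t ν x :=
  integral_nonneg fun _ => gaussDens_nonneg σ t _

lemma integrable_gaussDens_comp_sub (ν : Measure ℝ) [IsFiniteMeasure ν] (σ : ℝ) {t : ℝ}
    (ht : 0 ≤ t) (x : ℝ) : Integrable (fun y => gaussDens σ t (x - y)) ν :=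
  .of_bound (by fun_prop) _ (ae_of_all _ fun y => by
    rw [Real.norm_of_nonneg (gaussDens_nonneg σ t _)]
    exact gaussDens_le ht σ (x - y))

lemma lintegral_prod_comp_sub (ν : Measure ℝ) [SFinite ν] {h : ℝ → ℝ≥0∞}
    (hh : Measurable h) :
    ∫⁻ z, h (z.1 - z.2) ∂(volume.prod ν) = ν Set.univ * ∫⁻ x, h x := by
  rw [lintegral_prod_symm' _ (by fun_prop)]
  simp_rw [lintegral_sub_right_eq_self h, lintegral_const, mul_comm]

lemma lintegral_mul_ofReal_convDens (ν : Measure ℝ) [IsFiniteMeasure ν] {σ t : ℝ}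
    (ht : 0 ≤ t) {f : ℝ → ℝ≥0∞} (hf : Measurable f) :
    ∫⁻ x, f x * ENNReal.ofReal (convDens σ t ν x) =
      ∫⁻ z, f z.1 * ENNReal.ofReal (gaussDens σ t (z.1 - z.2)) ∂(volume.prod ν) := by
  rw [lintegral_prod _ (by fun_prop)]
  refine lintegral_congr fun x => ?_
  rw [convDens, ofReal_integral_eq_lintegral_ofReal (integrable_gaussDens_comp_sub ν σ ht x)
    (ae_of_all _ fun y => gaussDens_nonneg σ t _), ← lintegral_const_mul _ (by fun_prop)]

lemma integrable_convDens (ν : Measure ℝ) [IsFiniteMeasure ν] {σ t : ℝ} (hσ : σ ≠ 0)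
    (ht : 0 < t) : Integrable (convDens σ t ν) := by
  have hmeas : StronglyMeasurable (convDens σ t ν) :=
    StronglyMeasurable.integral_prod_right'
      (by fun_prop : Continuous fun z : ℝ × ℝ => gaussDens σ t (z.1 - z.2)).stronglyMeasurable
  have hlint : ∫⁻ x, ENNReal.ofReal (convDens σ t ν x) = ν Set.univ := by
    simpa [lintegral_prod_comp_sub ν (h := fun z => ENNReal.ofReal (gaussDens σ t z))
      (by fun_prop), lintegral_gaussDens hσ ht] using
      lintegral_mul_ofReal_convDens ν (σ := σ) ht.le (f := 1) measurable_const
  refine ⟨hmeas.aestronglyMeasurable, (hasFiniteIntegral_iff_ofReal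
    (ae_of_all _ (convDens_nonneg σ t ν))).2 ?_⟩
  exact hlint ▸ measure_lt_top ν _

lemma hasDerivAt_convDens (ν : Measure ℝ) [IsFiniteMeasure ν] {σ t : ℝ} (hσ : σ ≠ 0)
    (ht : 0 < t) (x : ℝ) :
    HasDerivAt (convDens σ t ν)
      (∫ y, -((x - y) / (σ ^ 2 * t)) * gaussDens σ t (x - y) ∂ν) x := by
  have hv : 0 < σ ^ 2 * t := by positivity
  have hbound : ∀ z, ‖-(z / (σ ^ 2 * t)) * gaussDens σ t z‖ ≤
      √(σ ^ 2 * t) * (√(2 * π * σ ^ 2 * t))⁻¹ / (σ ^ 2 * t) := fun z => by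
    rw [norm_mul, norm_neg, norm_div, Real.norm_of_nonneg (gaussDens_nonneg σ t z),
      Real.norm_of_nonneg hv.le, div_mul_eq_mul_div, Real.norm_eq_abs]
    exact div_le_div_of_nonneg_right (abs_mul_gaussDens_le hσ ht z) hv.le
  refine (hasDerivAt_integral_of_dominated_loc_of_deriv_le Filter.univ_mem
    (.of_forall fun x => by fun_prop)
    (integrable_gaussDens_comp_sub ν σ ht.le x)
    (by fun_prop) (ae_of_all _ fun y x _ => hbound (x - y)) (integrable_const _)
    (ae_of_all _ fun y x _ => ?_)).2
  exact (hasDerivAt_gaussDens σ t (x - y)).comp_sub_const x y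

lemma enorm_mul_ofReal_sqrt_rpow_two (a : ℝ) {b : ℝ} (hb : 0 ≤ b) :
    (‖a‖ₑ * ENNReal.ofReal √b) ^ (2 : ℝ) = ENNReal.ofReal (a ^ 2) * ENNReal.ofReal b := by
  rw [ENNReal.rpow_two, mul_pow, Real.enorm_eq_ofReal_abs, ← ENNReal.ofReal_pow (abs_nonneg a),
    ← ENNReal.ofReal_pow (sqrt_nonneg b), sq_abs, sq_sqrt hb]

lemma lintegral_enorm_mul_enorm_deriv_convDens_le (ν : Measure ℝ) [IsFiniteMeasure ν]
    {σ t : ℝ} (hσ : σ ≠ 0) (ht : 0 < t) {w : ℝ → ℝ} (hw : Measurable w) :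
    ∫⁻ x, ‖w x‖ₑ * ‖deriv (convDens σ t ν) x‖ₑ ≤
      (∫⁻ x, ENNReal.ofReal (w x ^ 2) * ENNReal.ofReal (convDens σ t ν x)) ^ (1 / 2 : ℝ) *
        (ν Set.univ * ENNReal.ofReal (σ ^ 2 * t)⁻¹) ^ (1 / 2 : ℝ) := by
  set g := gaussDens σ t
  have hg : ∀ z, 0 ≤ g z := gaussDens_nonneg σ t
  let F : ℝ × ℝ → ℝ≥0∞ := fun z => ‖w z.1‖ₑ * ENNReal.ofReal √(g (z.1 - z.2))
  let G : ℝ × ℝ → ℝ≥0∞ := fun z =>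
    ‖(z.1 - z.2) / (σ ^ 2 * t)‖ₑ * ENNReal.ofReal √(g (z.1 - z.2))
  have hF : Measurable F := by fun_prop
  have hG : Measurable G := by fun_prop
  have hpointwise (x : ℝ) :
      ‖w x‖ₑ * ‖deriv (convDens σ t ν) x‖ₑ ≤ ∫⁻ y, F (x, y) * G (x, y) ∂ν := by
    rw [(hasDerivAt_convDens ν hσ ht x).deriv]
    refine (mul_le_mul_right (enorm_integral_le_lintegral_enorm _) _).trans_eq ?_
    rw [← lintegral_const_mul' _ _ enorm_ne_top]
    refine lintegral_congr fun y => ?_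
    have hsqrt :
        ‖g (x - y)‖ₑ = ENNReal.ofReal √(g (x - y)) * ENNReal.ofReal √(g (x - y)) := by
      rw [Real.enorm_of_nonneg (hg _), ← ENNReal.ofReal_mul (sqrt_nonneg _),
        mul_self_sqrt (hg _)]
    rw [enorm_mul, enorm_neg, hsqrt]
    ring
  have hF2 : ∫⁻ z, F z ^ (2 : ℝ) ∂(volume.prod ν) =
      ∫⁻ x, ENNReal.ofReal (w x ^ 2) * ENNReal.ofReal (convDens σ t ν x) := by
    simp_rw [F, enorm_mul_ofReal_sqrt_rpow_two _ (hg _)]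
    exact (lintegral_mul_ofReal_convDens ν ht.le
      (f := fun x => ENNReal.ofReal (w x ^ 2)) (by fun_prop)).symm
  have hG2 : ∫⁻ z, G z ^ (2 : ℝ) ∂(volume.prod ν) =
      ν Set.univ * ENNReal.ofReal (σ ^ 2 * t)⁻¹ := by
    simp_rw [G, enorm_mul_ofReal_sqrt_rpow_two _ (hg _)]
    rw [lintegral_prod_comp_sub ν (by fun_prop)
      (h := fun z => ENNReal.ofReal ((z / (σ ^ 2 * t)) ^ 2) * ENNReal.ofReal (g z)),
      lintegral_sq_div_mul_gaussDens hσ ht]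
  calc ∫⁻ x, ‖w x‖ₑ * ‖deriv (convDens σ t ν) x‖ₑ
      ≤ ∫⁻ x, ∫⁻ y, F (x, y) * G (x, y) ∂ν := lintegral_mono hpointwise
    _ = ∫⁻ z, (F * G) z ∂(volume.prod ν) := (lintegral_prod _ (hF.mul hG).aemeasurable).symm
    _ ≤ _ := ENNReal.lintegral_mul_le_Lp_mul_Lq _ Real.HolderConjugate.two_two
        hF.aemeasurable hG.aemeasurable
    _ = _ := by rw [hF2, hG2]

lemma integrable_sq_exp_sub_one_mul {p : ℝ → ℝ} (hp : Integrable p) (hp0 : ∀ x, 0 ≤ p x)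
    (hp2 : Integrable fun x => exp (2 * x) * p x) :
    Integrable fun x => (exp x - 1) ^ 2 * p x := by
  refine (hp2.add hp).mono' ((by fun_prop : Continuous fun x => (exp x - 1) ^ 2)
    |>.aestronglyMeasurable.mul hp.1) (ae_of_all _ fun x => ?_)
  rw [Real.norm_of_nonneg (mul_nonneg (sq_nonneg _) (hp0 x)), Pi.add_apply, two_mul, exp_add]
  nlinarith [mul_nonneg (exp_pos x).le (hp0 x)]

theorem stmt_15 (σ t : ℝ) (hσ : 0 < σ) (ht : 0 < t)
    (νJ : Measure ℝ) [IsProbabilityMeasure νJ]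
    (p' : ℝ → ℝ)
    (hderiv : ∀ x, HasDerivAt (convDens σ t νJ) (p' x) x)
    (hint2 : Integrable (fun x => Real.exp (2 * x) * convDens σ t νJ x)) :
    ∫ x, |Real.exp x - 1| * |p' x|
      ≤ (1 / (σ * Real.sqrt t)) *
        Real.sqrt (∫ x, (Real.exp x - 1) ^ 2 * convDens σ t νJ x) := by
  obtain rfl : p' = deriv (convDens σ t νJ) := funext fun x => (hderiv x).deriv.symm
  set p := convDens σ t νJ
  have hp0 : ∀ x, 0 ≤ p x := convDens_nonneg σ t νJ
  have hS0 : ∀ x, 0 ≤ (exp x - 1) ^ 2 * p x := fun x => mul_nonneg (sq_nonneg _) (hp0 x)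
  have hS := integrable_sq_exp_sub_one_mul (integrable_convDens νJ hσ.ne' ht) hp0 hint2
  have key := lintegral_enorm_mul_enorm_deriv_convDens_le νJ hσ.ne' ht
    (w := fun x => exp x - 1) (by fun_prop)
  simp_rw [measure_univ, one_mul, ← ENNReal.ofReal_mul (sq_nonneg _)] at key
  rw [← ofReal_integral_eq_lintegral_ofReal hS (.of_forall hS0)] at key
  calc ∫ x, |exp x - 1| * |deriv p x|
      = (∫⁻ x, ‖exp x - 1‖ₑ * ‖deriv p x‖ₑ).toReal := by
        simp_rw [← Real.norm_eq_abs, ← norm_mul, ← enorm_mul]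
        exact integral_norm_eq_lintegral_enorm
          ((by fun_prop : Continuous fun x => exp x - 1).measurable.mul
            (measurable_deriv p)).aestronglyMeasurable
    _ ≤ _ := ENNReal.toReal_mono (by finiteness) key
    _ = _ := by
      rw [ENNReal.toReal_mul, ← ENNReal.toReal_rpow, ← ENNReal.toReal_rpow,
        ENNReal.toReal_ofReal (integral_nonneg hS0),
        ENNReal.toReal_ofReal (by positivity), ← sqrt_eq_rpow, ← sqrt_eq_rpow, sqrt_inv,
        sqrt_mul (sq_nonneg σ), sqrt_sq hσ.le, mul_comm, one_div]
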